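/- For each n and 1 ≤ i ≤ n let W_{n,i} := s_n^{−2} Z_i² 1{Z_i² ≤ s_n²}. Then, as n → ∞, max_{1 ≤ k ≤ n} | Σ_{i=1}^k (W_{n,i} − E W_{n,i}) | converges to 0 in probability; that is, for every ε > 0, P( max_{1 ≤ k ≤ n} | Σ_{i=1}^k (W_{n,i} − E W_{n,i}) | ≥ ε ) → 0. -/

import Mathlib

open MeasureTheory ProbabilityTheory Filter
open scoped Classical

/-- The truncated, normalized square `W_{n,i} = s_n^{-2} Z_i² 1{Z_i² ≤ s_n²}`. -/
noncomputable def Wtrunc {Ω : Type*} (Z : ℕ → Ω → ℝ) (σ2 : ℕ → ℝ) (n i : ℕ) (ω : Ω) : ℝ :=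
  if (Z i ω) ^ 2 ≤ ∑ j ∈ Finset.range n, σ2 j then
    (Z i ω) ^ 2 / ∑ j ∈ Finset.range n, σ2 j else 0

/-!
The summands `W_{n,i}` are independent, take values in `[0, 1]`, and their means add up to at
most `1`. So for fixed `n` both `A_k = ∑_{i<k} W_{n,i}` and `B_k = ∑_{i<k} E W_{n,i}` are
nondecreasing in `k`, with `B_k ∈ [0, 1]`. Sort the indices `k ≤ n` into `⌊2/ε⌋ + 1` buckets of
width `ε/2` according to the value of `B_k`: the first and the last index of a bucket bracket all
the others, so by monotonicity `|A_k - B_k| ≥ ε` forces `|A_{k'} - B_{k'}| ≥ ε/2` at one of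
at most `2(⌊2/ε⌋ + 1)` indices `k'` that do not depend on `ω`. Chebyshev's inequality bounds each
of these events by `4 ∑_{i<n} Var W_{n,i} / ε²`, and this sum of variances tends to `0` by
Lindeberg's condition, because `W² ≤ η Z²/s_n² + 1{|Z| ≥ √η s_n} Z²/s_n²` for every `η > 0`.
-/

open Finset
open scoped ENNReal Topology

section Bracketing

variable {α : Type*} [LinearOrder α]

lemma exists_subset_card_le_bracketing {β : Type*} (f : α → β) (S : Finset α) (T : Finset β)
    (hf : Set.MapsTo f S T) :
    ∃ D ⊆ S, #D ≤ 2 * #T ∧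
      ∀ k ∈ S, ∃ a ∈ D, ∃ c ∈ D, a ≤ k ∧ k ≤ c ∧ f a = f k ∧ f c = f k := by
  set lo := S.filter fun a => ∀ b ∈ S, f b = f a → a ≤ b
  set hi := S.filter fun c => ∀ b ∈ S, f b = f c → b ≤ c
  have hlo : #lo ≤ #T := card_le_card_of_injOn f (fun a ha => hf (mem_filter.1 ha).1)
    fun a ha a' ha' h => le_antisymm ((mem_filter.1 ha).2 a' (mem_filter.1 ha').1 h.symm)
      ((mem_filter.1 ha').2 a (mem_filter.1 ha).1 h)
  have hhi : #hi ≤ #T := card_le_card_of_injOn f (fun c hc => hf (mem_filter.1 hc).1)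
    fun c hc c' hc' h => le_antisymm ((mem_filter.1 hc').2 c (mem_filter.1 hc).1 h)
      ((mem_filter.1 hc).2 c' (mem_filter.1 hc').1 h.symm)
  refine ⟨lo ∪ hi, union_subset (filter_subset _ _) (filter_subset _ _),
    (card_union_le _ _).trans (by omega), fun k hk => ?_⟩
  set F := S.filter fun b => f b = f k
  have hkF : k ∈ F := mem_filter.2 ⟨hk, rfl⟩
  obtain ⟨haS, ha⟩ := mem_filter.1 (F.min'_mem ⟨k, hkF⟩)
  obtain ⟨hcS, hc⟩ := mem_filter.1 (F.max'_mem ⟨k, hkF⟩)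
  refine ⟨_, mem_union_left _ (mem_filter.2 ⟨haS, fun b hb hfb => ?_⟩), _,
    mem_union_right _ (mem_filter.2 ⟨hcS, fun b hb hfb => ?_⟩),
    F.min'_le k hkF, F.le_max' k hkF, ha, hc⟩
  · exact F.min'_le b (mem_filter.2 ⟨hb, hfb.trans ha⟩)
  · exact F.le_max' b (mem_filter.2 ⟨hb, hfb.trans hc⟩)

lemma abs_sub_le_max_add_of_bracket {A B : α → ℝ} (hA : Monotone A) (hB : Monotone B)
    {a k c : α} (hak : a ≤ k) (hkc : k ≤ c) {δ : ℝ} (hδ : B c - B a ≤ δ) :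
    |A k - B k| ≤ max |A a - B a| |A c - B c| + δ := by
  have := hA hak; have := hA hkc; have := hB hak; have := hB hkc
  refine abs_sub_le_iff.2 ⟨?_, ?_⟩
  · linarith [le_abs_self (A c - B c), le_max_right |A a - B a| |A c - B c|]
  · linarith [neg_abs_le (A a - B a), le_max_left |A a - B a| |A c - B c|]

lemma abs_sub_lt_of_floor_div_eq {x y δ : ℝ} (hx : 0 ≤ x) (hy : 0 ≤ y) (hδ : 0 < δ)
    (h : ⌊x / δ⌋₊ = ⌊y / δ⌋₊) : |x - y| < δ := by
  have hxy : ⌊x / δ⌋ = ⌊y / δ⌋ := by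
    rw [← Int.natCast_floor_eq_floor (by positivity), ← Int.natCast_floor_eq_floor (by positivity),
      h]
  have := Int.abs_sub_lt_one_of_floor_eq_floor hxy
  rwa [← sub_div, abs_div, abs_of_pos hδ, div_lt_one hδ] at this

lemma measure_exists_abs_sub_ge_le {Ω : Type*} [MeasurableSpace Ω] (μ : Measure Ω)
    {A : α → Ω → ℝ} {B : α → ℝ} (hA : ∀ ω, Monotone fun k => A k ω) (hB : Monotone B)
    {S : Finset α} (hB01 : ∀ k ∈ S, B k ∈ Set.Icc (0 : ℝ) 1) {ε : ℝ} (hε : 0 < ε) {C : ℝ≥0∞}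
    (hC : ∀ k ∈ S, μ {ω | ε / 2 ≤ |A k ω - B k|} ≤ C) :
    μ {ω | ∃ k ∈ S, ε ≤ |A k ω - B k|} ≤ (2 * (⌊2 / ε⌋₊ + 1) : ℕ) * C := by
  have hε2 : 0 < ε / 2 := half_pos hε
  have hbucket : Set.MapsTo (fun k => ⌊B k / (ε / 2)⌋₊) S (range (⌊2 / ε⌋₊ + 1)) := by
    intro k hk
    have : B k / (ε / 2) ≤ 2 / ε := by
      rw [div_div_eq_mul_div]; gcongr; linarith [(hB01 k hk).2]
    exact mem_range.2 (Nat.lt_succ_of_le (Nat.floor_mono this))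
  obtain ⟨D, hDS, hD, hbr⟩ := exists_subset_card_le_bracketing _ S _ hbucket
  have hsub : {ω | ∃ k ∈ S, ε ≤ |A k ω - B k|} ⊆ ⋃ k ∈ D, {ω | ε / 2 ≤ |A k ω - B k|} := by
    rintro ω ⟨k, hk, hεk⟩
    obtain ⟨a, haD, c, hcD, hak, hkc, ha, hc⟩ := hbr k hk
    have hgap : B c - B a ≤ ε / 2 := (le_abs_self _).trans (abs_sub_lt_of_floor_div_eq
      (hB01 c (hDS hcD)).1 (hB01 a (hDS haD)).1 hε2 (hc.trans ha.symm)).le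
    have := abs_sub_le_max_add_of_bracket (hA ω) hB hak hkc hgap
    rcases le_max_iff.1 (show ε / 2 ≤ max |A a ω - B a| |A c ω - B c| by linarith) with h | h
    exacts [Set.mem_biUnion haD h, Set.mem_biUnion hcD h]
  calc μ {ω | ∃ k ∈ S, ε ≤ |A k ω - B k|}
      ≤ ∑ k ∈ D, μ {ω | ε / 2 ≤ |A k ω - B k|} :=
        (measure_mono hsub).trans (measure_biUnion_finset_le _ _)
    _ ≤ #D * C := by
        rw [← nsmul_eq_mul, ← sum_const]; exact sum_le_sum fun k hk => hC k (hDS hk)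
    _ ≤ _ := by gcongr; simpa using hD

end Bracketing

section IndependentSums

variable {Ω : Type*} [MeasurableSpace Ω] {P : Measure Ω} [IsProbabilityMeasure P]

lemma measure_abs_sum_sub_integral_ge_le {ι : Type*} {X : ι → Ω → ℝ}
    (hX : ∀ i, MemLp (X i) 2 P) (hind : iIndepFun X P) (s : Finset ι) {c : ℝ} (hc : 0 < c) :
    P {ω | c ≤ |∑ i ∈ s, (X i ω - P[X i])|} ≤
      ENNReal.ofReal ((∑ i ∈ s, Var[X i; P]) / c ^ 2) := by
  have hvar : Var[∑ i ∈ s, X i; P] = ∑ i ∈ s, Var[X i; P] :=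
    IndepFun.variance_sum (fun i _ => hX i) fun i _ j _ hij => hind.indepFun hij
  have hmean : ∫ ω, ∑ i ∈ s, X i ω ∂P = ∑ i ∈ s, P[X i] :=
    integral_finsetSum _ fun i _ => (hX i).integrable one_le_two
  have := meas_ge_le_variance_div_sq (memLp_finsetSum' s fun i _ => hX i) hc
  simpa only [hvar, Finset.sum_apply, hmean, sum_sub_distrib] using this

lemma measure_exists_abs_partial_sum_sub_ge_le {X : ℕ → Ω → ℝ} (hX0 : ∀ i ω, 0 ≤ X i ω)
    (hX : ∀ i, MemLp (X i) 2 P) (hind : iIndepFun X P) {n : ℕ}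
    (hmean : ∑ i ∈ range n, P[X i] ≤ 1) {S : Finset ℕ} (hS : ∀ k ∈ S, k ≤ n) {ε : ℝ}
    (hε : 0 < ε) :
    P {ω | ∃ k ∈ S, ε ≤ |∑ i ∈ range k, (X i ω - P[X i])|} ≤
      (2 * (⌊2 / ε⌋₊ + 1) : ℕ) * ENNReal.ofReal ((∑ i ∈ range n, Var[X i; P]) / (ε / 2) ^ 2) := by
  have hB : Monotone fun k => ∑ i ∈ range k, P[X i] :=
    (sum_mono_set_of_nonneg fun i => integral_nonneg (hX0 i)).comp range_mono
  simp only [sum_sub_distrib]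
  refine measure_exists_abs_sub_ge_le P (A := fun k ω => ∑ i ∈ range k, X i ω)
    (fun ω => (sum_mono_set_of_nonneg fun i => hX0 i ω).comp range_mono) hB
    (fun k hk => ⟨sum_nonneg fun i _ => integral_nonneg (hX0 i), (hB (hS k hk)).trans hmean⟩)
    hε fun k hk => ?_
  simp only [← sum_sub_distrib]
  refine (measure_abs_sum_sub_integral_ge_le hX hind _ (half_pos hε)).trans
    (ENNReal.ofReal_le_ofReal ?_)
  gcongr
  exacts [fun i _ _ => variance_nonneg _ _, hS k hk]

end IndependentSums

/-- `Wtrunc Z σ2 n i` is definitionally `truncSq (∑ j ∈ range n, σ2 j) ∘ Z i`. -/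
noncomputable def truncSq (s x : ℝ) : ℝ :=
  if x ^ 2 ≤ s then x ^ 2 / s else 0

lemma measurable_truncSq (s : ℝ) : Measurable (truncSq s) :=
  Measurable.ite (measurableSet_le (measurable_id.pow_const 2) measurable_const)
    ((measurable_id.pow_const 2).div_const _) measurable_const

section truncSq

variable {s : ℝ} (hs : 0 ≤ s) (x : ℝ)
include hs

lemma truncSq_nonneg : 0 ≤ truncSq s x := by
  unfold truncSq; split_ifs <;> positivity

lemma truncSq_le_one : truncSq s x ≤ 1 := by
  unfold truncSq; split_ifs with h
  exacts [div_le_one_of_le₀ h hs, zero_le_one]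

lemma truncSq_le_sq_div : truncSq s x ≤ x ^ 2 / s := by
  unfold truncSq; split_ifs <;> first | rfl | positivity

lemma sq_truncSq_le (ε : ℝ) :
    truncSq s x ^ 2 ≤
      ε ^ 2 * (x ^ 2 / s) + {y | ε * √s ≤ |y|}.indicator (fun y => y ^ 2 / s) x := by
  have h0 := truncSq_nonneg hs x
  have hle := truncSq_le_sq_div hs x
  by_cases hx : ε * √s ≤ |x|
  · rw [Set.indicator_of_mem (show x ∈ {y : ℝ | ε * √s ≤ |y|} from hx)]
    have : truncSq s x ^ 2 ≤ truncSq s x := by nlinarith [truncSq_le_one hs x]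
    nlinarith [sq_nonneg ε, div_nonneg (sq_nonneg x) hs]
  · rw [Set.indicator_of_notMem (show x ∉ {y : ℝ | ε * √s ≤ |y|} from hx), add_zero]
    have hsmall : x ^ 2 / s ≤ ε ^ 2 := by
      refine div_le_of_le_mul₀ hs (sq_nonneg ε) ?_
      have := pow_lt_pow_left₀ (not_le.1 hx) (abs_nonneg x) two_ne_zero
      rw [sq_abs, mul_pow, Real.sq_sqrt hs] at this
      exact this.le
    calc truncSq s x ^ 2 = truncSq s x * truncSq s x := sq _
      _ ≤ ε ^ 2 * (x ^ 2 / s) := by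
        rw [mul_comm]; exact mul_le_mul (hle.trans hsmall) hle h0 (sq_nonneg ε)

end truncSq

section Truncation

variable {Ω : Type*} [MeasurableSpace Ω] {P : Measure Ω} {Z : ℕ → Ω → ℝ} {σ2 : ℕ → ℝ}

lemma nonneg_of_integral_sq_eq (hvar : ∀ i, ∫ ω, Z i ω ^ 2 ∂P = σ2 i) (i : ℕ) : 0 ≤ σ2 i :=
  hvar i ▸ integral_nonneg fun _ => sq_nonneg _

lemma iIndepFun_Wtrunc (hindep : iIndepFun Z P) (n : ℕ) : iIndepFun (Wtrunc Z σ2 n) P :=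
  hindep.comp (fun _ => truncSq _) fun _ => measurable_truncSq _

variable [IsProbabilityMeasure P]

lemma memLp_Wtrunc (hL2 : ∀ i, MemLp (Z i) 2 P) (hσ : ∀ i, 0 ≤ σ2 i) (n i : ℕ) (p : ℝ≥0∞) :
    MemLp (Wtrunc Z σ2 n i) p P := by
  have hs : 0 ≤ ∑ j ∈ range n, σ2 j := sum_nonneg fun j _ => hσ j
  refine memLp_of_bounded (a := 0) (b := 1)
    (Eventually.of_forall fun ω => ⟨truncSq_nonneg hs _, truncSq_le_one hs _⟩) ?_ p
  exact ((measurable_truncSq _).comp_aemeasurable (hL2 i).1.aemeasurable).aestronglyMeasurable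

lemma sum_integral_Wtrunc_le_one (hL2 : ∀ i, MemLp (Z i) 2 P)
    (hvar : ∀ i, ∫ ω, Z i ω ^ 2 ∂P = σ2 i) (n : ℕ) :
    ∑ i ∈ range n, P[Wtrunc Z σ2 n i] ≤ 1 := by
  have hσ := nonneg_of_integral_sq_eq hvar
  have hs : 0 ≤ ∑ j ∈ range n, σ2 j := sum_nonneg fun j _ => hσ j
  calc ∑ i ∈ range n, P[Wtrunc Z σ2 n i]
      ≤ ∑ i ∈ range n, σ2 i / ∑ j ∈ range n, σ2 j := sum_le_sum fun i _ => by
        rw [← hvar i, ← integral_div]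
        exact integral_mono ((memLp_Wtrunc hL2 hσ n i 2).integrable one_le_two)
          ((hL2 i).integrable_sq.div_const _) fun ω => truncSq_le_sq_div hs _
    _ = (∑ i ∈ range n, σ2 i) / ∑ j ∈ range n, σ2 j := (sum_div _ _ _).symm
    _ ≤ 1 := div_self_le_one _

lemma sum_variance_Wtrunc_le (hL2 : ∀ i, MemLp (Z i) 2 P)
    (hvar : ∀ i, ∫ ω, Z i ω ^ 2 ∂P = σ2 i) (n : ℕ) (ε : ℝ) :
    ∑ i ∈ range n, Var[Wtrunc Z σ2 n i; P] ≤ ε ^ 2 + (∑ i ∈ range n, σ2 i)⁻¹ *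
      ∑ i ∈ range n, ∫ ω in {ω | ε * √(∑ j ∈ range n, σ2 j) ≤ |Z i ω|}, Z i ω ^ 2 ∂P := by
  have hσ := nonneg_of_integral_sq_eq hvar
  set s := ∑ j ∈ range n, σ2 j
  have hs : 0 ≤ s := sum_nonneg fun j _ => hσ j
  have hterm (i : ℕ) : Var[Wtrunc Z σ2 n i; P] ≤
      ε ^ 2 * (σ2 i / s) + s⁻¹ * ∫ ω in {ω | ε * √s ≤ |Z i ω|}, Z i ω ^ 2 ∂P := by
    have hZ2 := (hL2 i).integrable_sq
    have hset : NullMeasurableSet {ω | ε * √s ≤ |Z i ω|} P :=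
      nullMeasurableSet_le aemeasurable_const (hL2 i).1.aemeasurable.abs
    calc Var[Wtrunc Z σ2 n i; P]
        ≤ P[Wtrunc Z σ2 n i ^ 2] :=
          variance_le_expectation_sq (memLp_Wtrunc hL2 hσ n i 2).1
      _ ≤ ∫ ω, ε ^ 2 * (Z i ω ^ 2 / s) +
            {ω | ε * √s ≤ |Z i ω|}.indicator (fun ω => Z i ω ^ 2 / s) ω ∂P :=
          integral_mono (f := fun ω => Wtrunc Z σ2 n i ω ^ 2)
            (memLp_Wtrunc hL2 hσ n i 2).integrable_sq
            ((hZ2.div_const s).const_mul _ |>.add ((hZ2.div_const s).indicator₀ hset))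
            fun ω => sq_truncSq_le hs (Z i ω) ε
      _ = ε ^ 2 * (σ2 i / s) + s⁻¹ * ∫ ω in {ω | ε * √s ≤ |Z i ω|}, Z i ω ^ 2 ∂P := by
          rw [integral_add ((hZ2.div_const s).const_mul _) ((hZ2.div_const s).indicator₀ hset),
            integral_const_mul, integral_div, hvar, integral_indicator₀ hset, integral_div]
          ring
  calc ∑ i ∈ range n, Var[Wtrunc Z σ2 n i; P]
      ≤ ∑ i ∈ range n,
          (ε ^ 2 * (σ2 i / s) + s⁻¹ * ∫ ω in {ω | ε * √s ≤ |Z i ω|}, Z i ω ^ 2 ∂P) :=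
        sum_le_sum fun i _ => hterm i
    _ = ε ^ 2 * (s / s) + s⁻¹ * ∑ i ∈ range n, ∫ ω in {ω | ε * √s ≤ |Z i ω|}, Z i ω ^ 2 ∂P := by
        rw [sum_add_distrib, ← mul_sum, ← mul_sum, ← sum_div]
    _ ≤ _ := by gcongr; exact mul_le_of_le_one_right (sq_nonneg ε) (div_self_le_one s)

lemma tendsto_sum_variance_Wtrunc (hL2 : ∀ i, MemLp (Z i) 2 P)
    (hvar : ∀ i, ∫ ω, Z i ω ^ 2 ∂P = σ2 i)
    (hLind : ∀ ε > (0 : ℝ), Tendsto (fun n => (∑ i ∈ range n, σ2 i)⁻¹ *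
      ∑ i ∈ range n, ∫ ω in {ω | ε * √(∑ j ∈ range n, σ2 j) ≤ |Z i ω|}, Z i ω ^ 2 ∂P)
      atTop (𝓝 0)) :
    Tendsto (fun n => ∑ i ∈ range n, Var[Wtrunc Z σ2 n i; P]) atTop (𝓝 0) := by
  refine tendsto_order.2 ⟨fun η hη => Eventually.of_forall fun n =>
    hη.trans_le (sum_nonneg fun i _ => variance_nonneg _ _), fun η hη => ?_⟩
  have hη2 : 0 < η / 2 := half_pos hη
  filter_upwards [(hLind _ (Real.sqrt_pos.2 hη2)).eventually (gt_mem_nhds hη2)] with n hn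
  calc ∑ i ∈ range n, Var[Wtrunc Z σ2 n i; P]
      ≤ √(η / 2) ^ 2 + _ := sum_variance_Wtrunc_le hL2 hvar n _
    _ < η := by rw [Real.sq_sqrt hη2.le]; linarith

end Truncation

theorem max_truncated_centered_partial_sums_negligible_general
    {Ω : Type*} [MeasurableSpace Ω] (P : Measure Ω) [IsProbabilityMeasure P]
    (Z : ℕ → Ω → ℝ) (σ2 : ℕ → ℝ)
    (hindep : iIndepFun Z P)
    (hL2 : ∀ i, MemLp (Z i) 2 P)
    (hvar : ∀ i, ∫ ω, (Z i ω) ^ 2 ∂P = σ2 i)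
    (hLind : ∀ ε > (0 : ℝ), Tendsto (fun n =>
      (∑ i ∈ Finset.range n, σ2 i)⁻¹ *
        ∑ i ∈ Finset.range n,
          ∫ ω in {ω | ε * Real.sqrt (∑ j ∈ Finset.range n, σ2 j) ≤ |Z i ω|}, (Z i ω) ^ 2 ∂P)
      atTop (nhds 0)) :
    ∀ ε > (0 : ℝ), Tendsto (fun n =>
      P {ω | ∃ k ∈ Finset.Icc 1 n,
        ε ≤ |∑ i ∈ Finset.range k, (Wtrunc Z σ2 n i ω - ∫ ω', Wtrunc Z σ2 n i ω' ∂P)|})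
      atTop (nhds 0) := by
  intro ε hε
  have hσ := nonneg_of_integral_sq_eq hvar
  have hmax (n : ℕ) := measure_exists_abs_partial_sum_sub_ge_le
    (fun i ω => truncSq_nonneg (sum_nonneg fun j _ => hσ j) (Z i ω))
    (fun i => memLp_Wtrunc hL2 hσ n i 2) (iIndepFun_Wtrunc hindep n)
    (sum_integral_Wtrunc_le_one hL2 hvar n) (S := Icc 1 n) (fun k hk => (mem_Icc.1 hk).2) hε
  have hbound : Tendsto (fun n => ((2 * (⌊2 / ε⌋₊ + 1) : ℕ) : ℝ≥0∞) *
      ENNReal.ofReal ((∑ i ∈ range n, Var[Wtrunc Z σ2 n i; P]) / (ε / 2) ^ 2)) atTop (𝓝 0) := by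
    simpa using ENNReal.Tendsto.const_mul (a := ((2 * (⌊2 / ε⌋₊ + 1) : ℕ) : ℝ≥0∞))
      (ENNReal.tendsto_ofReal ((tendsto_sum_variance_Wtrunc hL2 hvar hLind).div_const _))
      (Or.inr (ENNReal.natCast_ne_top _))
  exact tendsto_of_tendsto_of_tendsto_of_le_of_le tendsto_const_nhds hbound
    (fun _ => bot_le) hmax

/-- Under Lindeberg's condition, `max_{1 ≤ k ≤ n} |∑_{i=1}^k (W_{n,i} - E W_{n,i})|`
converges to 0 in probability, where `W_{n,i} = s_n⁻² Z_i² 1{Z_i² ≤ s_n²}`. -/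
theorem max_truncated_centered_partial_sums_negligible
    {Ω : Type*} [MeasurableSpace Ω] (P : Measure Ω) [IsProbabilityMeasure P]
    (Z : ℕ → Ω → ℝ) (σ2 : ℕ → ℝ)
    (hmeas : ∀ i, Measurable (Z i))
    (hindep : iIndepFun Z P)
    (hL2 : ∀ i, MemLp (Z i) 2 P)
    (hmean : ∀ i, ∫ ω, Z i ω ∂P = 0)
    (hvar : ∀ i, ∫ ω, (Z i ω) ^ 2 ∂P = σ2 i)
    (hpos : ∀ i, 0 < σ2 i)
    (hLind : ∀ ε > (0 : ℝ), Tendsto (fun n =>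
      (∑ i ∈ Finset.range n, σ2 i)⁻¹ *
        ∑ i ∈ Finset.range n,
          ∫ ω in {ω | ε * Real.sqrt (∑ j ∈ Finset.range n, σ2 j) ≤ |Z i ω|}, (Z i ω) ^ 2 ∂P)
      atTop (nhds 0)) :
    ∀ ε > (0 : ℝ), Tendsto (fun n =>
      P {ω | ∃ k ∈ Finset.Icc 1 n,
        ε ≤ |∑ i ∈ Finset.range k, (Wtrunc Z σ2 n i ω - ∫ ω', Wtrunc Z σ2 n i ω' ∂P)|})
      atTop (nhds 0) :=
  max_truncated_centered_partial_sums_negligible_general P Z σ2 hindep hL2 hvar hLind
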